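/- arXiv:math/9909064 — 3 statements merged into one kernel-verified Lean document; each statement's English description precedes it below -/
import Mathlib

section
/- On (ℝ³)^k with the k-fold product of su(2)* Poisson brackets (the bracket associated to the block-diagonal bivector, i.e. the sum over the k factors), define for 1 ≤ m ≤ k the partial-sum functions C_m(v₁,…,v_k) = ‖v₁ + ⋯ + v_m‖² and the individual Casimirs c_i(v₁,…,v_k) = ‖v_i‖² for 1 ≤ i ≤ k. Then all the functions C₁,…,C_k, c₁,…,c_k are pairwise in involution, and consequently the Hamiltonian H^{(k)} = Σ_{i<j} (x_i x_j + y_i y_j + z_i z_j) = ½(C_k − Σ_{i=1}^k c_i) is in involution with each C_m and each c_i. -/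
/-- The partial derivative of `F : (ℝ³)^k → ℝ` in the `a`-th coordinate of the
`i`-th factor. -/
noncomputable def pd3 {k : ℕ} (i : Fin k) (a : Fin 3)
    (F : (Fin k → Fin 3 → ℝ) → ℝ) (v : Fin k → Fin 3 → ℝ) : ℝ :=
  fderiv ℝ F v (Pi.single i (Pi.single a 1))

/-- The `k`-fold product of `su(2)*` Poisson brackets on `(ℝ³)^k`: the sum over the
`k` factors of the `su(2)*` bracket applied in the variables of each factor. -/
noncomputable def su2BrK {k : ℕ} (F G : (Fin k → Fin 3 → ℝ) → ℝ)
    (v : Fin k → Fin 3 → ℝ) : ℝ :=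
  ∑ i, (v i 0 * (pd3 i 1 F v * pd3 i 2 G v - pd3 i 2 F v * pd3 i 1 G v)
      + v i 1 * (pd3 i 2 F v * pd3 i 0 G v - pd3 i 0 F v * pd3 i 2 G v)
      + v i 2 * (pd3 i 0 F v * pd3 i 1 G v - pd3 i 1 F v * pd3 i 0 G v))

/-- The partial-sum function `C_m(v₁,…,v_k) = ‖v₁ + ⋯ + v_m‖²`. -/
def partialSumC {k : ℕ} (m : ℕ) (v : Fin k → Fin 3 → ℝ) : ℝ :=
  ∑ a : Fin 3, (∑ i ∈ Finset.univ.filter (fun i : Fin k => (i : ℕ) < m), v i a) ^ 2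

/-- The individual Casimir `c_i(v₁,…,v_k) = ‖v_i‖²`. -/
def indivC {k : ℕ} (i : Fin k) (v : Fin k → Fin 3 → ℝ) : ℝ :=
  ∑ a : Fin 3, (v i a) ^ 2

/-- The Hamiltonian `H^{(k)} = Σ_{i<j} (x_i x_j + y_i y_j + z_i z_j)`. -/
def Hkk {k : ℕ} (v : Fin k → Fin 3 → ℝ) : ℝ :=
  ∑ p ∈ Finset.univ.filter (fun p : Fin k × Fin k => p.1 < p.2),
    ∑ a : Fin 3, v p.1 a * v p.2 a

open Finset

abbrev EE (k : ℕ) := Fin k → Fin 3 → ℝ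

noncomputable def ev {k : ℕ} (i : Fin k) (a : Fin 3) : EE k →L[ℝ] ℝ :=
  (ContinuousLinearMap.proj a : (Fin 3 → ℝ) →L[ℝ] ℝ).comp
    (ContinuousLinearMap.proj i : EE k →L[ℝ] (Fin 3 → ℝ))

lemma ev_apply {k : ℕ} (i : Fin k) (a : Fin 3) (v : EE k) : ev i a v = v i a := rfl

lemma ev_single {k : ℕ} (i j : Fin k) (a b : Fin 3) :
    ev j b (Pi.single i (Pi.single a 1)) =
      if j = i then (if b = a then 1 else 0) else 0 := by
  rw [ev_apply]
  rcases eq_or_ne j i with h | h <;> simp [h, Pi.single_apply]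

lemma hfd_sq {k : ℕ} (P : Fin 3 → (EE k →L[ℝ] ℝ)) (v : EE k) :
    HasFDerivAt (fun v => ∑ a : Fin 3, (P a v) ^ 2)
      (∑ a : Fin 3, (2 * P a v) • (P a)) v := by
  apply HasFDerivAt.fun_sum
  intro a _
  have h := ((P a).hasFDerivAt (x := v)).mul ((P a).hasFDerivAt (x := v))
  have e : (fun w => P a w * P a w) = fun w => (P a w) ^ 2 := by
    funext w; ring
  rw [show ((P a : EE k → ℝ) * P a) = fun w => (P a w) ^ 2 from e] at h
  refine h.congr_fderiv ?_
  rw [two_mul, add_smul]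

lemma partialSumC_eq {k : ℕ} (m : ℕ) :
    (partialSumC m : EE k → ℝ)
      = fun v => ∑ a : Fin 3,
          ((∑ j ∈ Finset.univ.filter (fun j : Fin k => (j : ℕ) < m), ev j a) v) ^ 2 := by
  funext v
  simp [partialSumC, ev_apply, ContinuousLinearMap.coe_sum', Finset.sum_apply]

lemma hfd_partialSumC {k : ℕ} (m : ℕ) (v : EE k) :
    HasFDerivAt (partialSumC m : EE k → ℝ)
      (∑ a : Fin 3, (2 * ∑ j ∈ Finset.univ.filter (fun j : Fin k => (j : ℕ) < m), v j a) •
        (∑ j ∈ Finset.univ.filter (fun j : Fin k => (j : ℕ) < m), ev j a)) v := by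
  rw [partialSumC_eq]
  convert hfd_sq (fun a => ∑ j ∈ Finset.univ.filter (fun j : Fin k => (j : ℕ) < m), ev j a) v
    using 2
  simp [ContinuousLinearMap.coe_sum', Finset.sum_apply, ev_apply]

lemma pd_partialSumC {k : ℕ} (m : ℕ) (i : Fin k) (a : Fin 3) (v : EE k) :
    pd3 i a (partialSumC m) v =
      if (i : ℕ) < m then
        2 * ∑ j ∈ Finset.univ.filter (fun j : Fin k => (j : ℕ) < m), v j a
      else 0 := by
  rw [pd3, (hfd_partialSumC m v).fderiv]
  rw [ContinuousLinearMap.sum_apply]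
  have key : ∀ b : Fin 3,
      ((2 * ∑ j ∈ Finset.univ.filter (fun j : Fin k => (j : ℕ) < m), v j b) •
        (∑ j ∈ Finset.univ.filter (fun j : Fin k => (j : ℕ) < m), ev j b))
        (Pi.single i (Pi.single a 1))
      = (2 * ∑ j ∈ Finset.univ.filter (fun j : Fin k => (j : ℕ) < m), v j b) *
          (if (i:ℕ) < m then (if b = a then 1 else 0) else 0) := by
    intro b
    rw [ContinuousLinearMap.smul_apply, ContinuousLinearMap.sum_apply]
    simp only [ev_single, smul_eq_mul]
    congr 1
    rw [Finset.sum_ite_eq' (Finset.univ.filter (fun j : Fin k => (j : ℕ) < m)) i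
      (fun _ => if b = a then (1:ℝ) else 0)]
    simp
  simp only [key]
  by_cases h : (i : ℕ) < m <;> simp [h, mul_ite, Finset.sum_ite_eq']

lemma hfd_indivC {k : ℕ} (i : Fin k) (v : EE k) :
    HasFDerivAt (indivC i : EE k → ℝ) (∑ a : Fin 3, (2 * v i a) • ev i a) v := by
  have := hfd_sq (fun a => ev i a) v
  convert this using 2 <;> simp [indivC, ev_apply]

lemma pd_indivC {k : ℕ} (j i : Fin k) (a : Fin 3) (v : EE k) :
    pd3 i a (indivC j) v = if i = j then 2 * v j a else 0 := by
  rw [pd3, (hfd_indivC j v).fderiv, ContinuousLinearMap.sum_apply]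
  simp only [ContinuousLinearMap.smul_apply, ev_single, smul_eq_mul]
  rcases eq_or_ne i j with rfl | h
  · simp [mul_ite, Finset.sum_ite_eq']
  · simp [h, Ne.symm h]

lemma sq_sum_aux {k : ℕ} (f : Fin k → ℝ) :
    (∑ i, f i) ^ 2 = ∑ i, (f i) ^ 2
      + 2 * ∑ p ∈ Finset.univ.filter (fun p : Fin k × Fin k => p.1 < p.2), f p.1 * f p.2 := by
  have h0 : (∑ i, f i) ^ 2 = ∑ p ∈ (univ ×ˢ univ : Finset (Fin k × Fin k)), f p.1 * f p.2 := by
    rw [sq, Finset.sum_mul_sum, ← Finset.sum_product']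
  have h1 := Finset.sum_filter_add_sum_filter_not (univ ×ˢ univ : Finset (Fin k × Fin k))
    (fun p => p.1 < p.2) (fun p => f p.1 * f p.2)
  have h2 := Finset.sum_filter_add_sum_filter_not
    ((univ ×ˢ univ : Finset (Fin k × Fin k)).filter (fun p => ¬ p.1 < p.2))
    (fun p => p.1 = p.2) (fun p => f p.1 * f p.2)
  have hdiag : ∑ p ∈ (((univ ×ˢ univ : Finset (Fin k × Fin k)).filter
        (fun p => ¬ p.1 < p.2)).filter (fun p => p.1 = p.2)), f p.1 * f p.2
      = ∑ i, (f i) ^ 2 := by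
    refine Finset.sum_bij' (fun p _ => p.1) (fun i _ => (i, i)) ?_ ?_ ?_ ?_ ?_
    · intro p hp; exact Finset.mem_univ _
    · intro i _
      simp
    · intro p hp
      have h := (Finset.mem_filter.mp hp).2
      exact Prod.ext_iff.mpr ⟨rfl, h⟩
    · intro i _; rfl
    · intro p hp
      have h := (Finset.mem_filter.mp hp).2
      rw [← h, sq]
  have hswap : ∑ p ∈ (((univ ×ˢ univ : Finset (Fin k × Fin k)).filter
        (fun p => ¬ p.1 < p.2)).filter (fun p => ¬ p.1 = p.2)), f p.1 * f p.2
      = ∑ p ∈ (univ ×ˢ univ : Finset (Fin k × Fin k)).filter (fun p => p.1 < p.2),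
          f p.1 * f p.2 := by
    refine Finset.sum_bij' (fun p _ => Prod.swap p) (fun p _ => Prod.swap p) ?_ ?_ ?_ ?_ ?_
    · intro p hp
      have h := Finset.mem_filter.mp hp
      have h1 := (Finset.mem_filter.mp h.1).2
      have h2 := h.2
      simp only [Finset.mem_filter, Finset.mem_product]
      exact ⟨⟨Finset.mem_univ _, Finset.mem_univ _⟩,
        lt_of_le_of_ne (not_lt.mp h1) (Ne.symm h2)⟩
    · intro p hp
      have h := (Finset.mem_filter.mp hp).2
      simp only [Finset.mem_filter, Finset.mem_product]
      exact ⟨⟨⟨Finset.mem_univ _, Finset.mem_univ _⟩, not_lt.mpr h.le⟩, (ne_of_gt h)⟩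
    · intro p hp; exact Prod.swap_swap p
    · intro p hp; exact Prod.swap_swap p
    · intro p hp; exact mul_comm _ _
  rw [h0, ← h1, ← h2, hdiag, hswap, Finset.univ_product_univ]
  ring

lemma hkk_eq {k : ℕ} :
    (Hkk : EE k → ℝ) = fun v => (partialSumC k v - ∑ i, indivC i v) / 2 := by
  funext v
  have hfilter : (Finset.univ.filter (fun i : Fin k => (i : ℕ) < k)) = Finset.univ := by
    apply Finset.filter_true_of_mem; intro i _; exact i.isLt
  simp only [Hkk, partialSumC, indivC, hfilter]
  rw [Finset.sum_congr rfl (fun a _ => sq_sum_aux (fun i => v i a)),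
    Finset.sum_add_distrib, ← Finset.mul_sum]
  rw [Finset.sum_comm (s := (Finset.univ : Finset (Fin 3)))
    (t := (Finset.univ : Finset (Fin k))) (f := fun a i => (v i a) ^ 2)]
  rw [Finset.sum_comm (s := (Finset.univ : Finset (Fin 3)))]
  ring

lemma pd_Hkk {k : ℕ} (i : Fin k) (a : Fin 3) (v : EE k) :
    pd3 i a (Hkk : EE k → ℝ) v = (∑ j, v j a) - v i a := by
  have h2 : HasFDerivAt (fun v : EE k => ∑ j, indivC j v)
      (∑ j, ∑ b : Fin 3, (2 * v j b) • ev j b) v :=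
    HasFDerivAt.fun_sum (fun j _ => hfd_indivC j v)
  have h1 := hfd_partialSumC (k := k) k v
  have hH : HasFDerivAt (Hkk : EE k → ℝ)
      ((2 : ℝ)⁻¹ • ((∑ a : Fin 3,
        (2 * ∑ j ∈ Finset.univ.filter (fun j : Fin k => (j : ℕ) < k), v j a) •
          (∑ j ∈ Finset.univ.filter (fun j : Fin k => (j : ℕ) < k), ev j a))
        - ∑ j, ∑ b : Fin 3, (2 * v j b) • ev j b)) v := by
    rw [hkk_eq]
    have := (h1.sub h2).const_mul (2 : ℝ)⁻¹
    convert this using 2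
    case e'_11 => rw [div_eq_inv_mul]; rfl
    all_goals rfl
  rw [pd3, hH.fderiv]
  rw [ContinuousLinearMap.smul_apply, ContinuousLinearMap.sub_apply]
  have e1 : (∑ a : Fin 3,
        (2 * ∑ j ∈ Finset.univ.filter (fun j : Fin k => (j : ℕ) < k), v j a) •
          (∑ j ∈ Finset.univ.filter (fun j : Fin k => (j : ℕ) < k), ev j a))
        (Pi.single i (Pi.single a 1)) = 2 * ∑ j, v j a := by
    have h := pd_partialSumC (k := k) k i a v
    rw [pd3, h1.fderiv] at h
    rw [h, if_pos i.isLt]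
    congr 1
    apply Finset.sum_congr _ (fun _ _ => rfl)
    apply Finset.filter_true_of_mem; intro j _; exact j.isLt
  have e2 : ((∑ j, ∑ b : Fin 3, (2 * v j b) • ev j b : EE k →L[ℝ] ℝ))
      (Pi.single i (Pi.single a 1)) = 2 * v i a := by
    rw [ContinuousLinearMap.sum_apply]
    have : ∀ j : Fin k, ((∑ b : Fin 3, (2 * v j b) • ev j b : EE k →L[ℝ] ℝ))
        (Pi.single i (Pi.single a 1)) = if i = j then 2 * v j a else 0 := by
      intro j
      have h := pd_indivC j i a v
      rw [pd3, (hfd_indivC j v).fderiv] at h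
      exact h
    simp only [this]
    rw [Finset.sum_ite_eq Finset.univ i (fun j => 2 * v j a)]
    simp
  rw [e1, e2, smul_eq_mul]
  ring

lemma sum_dot {k : ℕ} (s : Finset (Fin k)) (v : EE k) (c0 c1 c2 : ℝ) :
    ∑ i ∈ s, (v i 0 * c0 + v i 1 * c1 + v i 2 * c2)
      = (∑ i ∈ s, v i 0) * c0 + (∑ i ∈ s, v i 1) * c1 + (∑ i ∈ s, v i 2) * c2 := by
  simp [Finset.sum_add_distrib, Finset.sum_mul]

lemma br_CC {k : ℕ} (m m' : ℕ) :
    su2BrK (partialSumC m) (partialSumC m' : EE k → ℝ) = 0 := by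
  funext v
  simp only [su2BrK, pd_partialSumC, Pi.zero_apply]
  have step : ∀ i : Fin k,
      (v i 0 * ((if (i:ℕ) < m then 2 * ∑ j ∈ Finset.univ.filter (fun j : Fin k => (j:ℕ) < m), v j 1 else 0) *
            (if (i:ℕ) < m' then 2 * ∑ j ∈ Finset.univ.filter (fun j : Fin k => (j:ℕ) < m'), v j 2 else 0) -
          (if (i:ℕ) < m then 2 * ∑ j ∈ Finset.univ.filter (fun j : Fin k => (j:ℕ) < m), v j 2 else 0) *
            (if (i:ℕ) < m' then 2 * ∑ j ∈ Finset.univ.filter (fun j : Fin k => (j:ℕ) < m'), v j 1 else 0))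
        + v i 1 * ((if (i:ℕ) < m then 2 * ∑ j ∈ Finset.univ.filter (fun j : Fin k => (j:ℕ) < m), v j 2 else 0) *
            (if (i:ℕ) < m' then 2 * ∑ j ∈ Finset.univ.filter (fun j : Fin k => (j:ℕ) < m'), v j 0 else 0) -
          (if (i:ℕ) < m then 2 * ∑ j ∈ Finset.univ.filter (fun j : Fin k => (j:ℕ) < m), v j 0 else 0) *
            (if (i:ℕ) < m' then 2 * ∑ j ∈ Finset.univ.filter (fun j : Fin k => (j:ℕ) < m'), v j 2 else 0))
        + v i 2 * ((if (i:ℕ) < m then 2 * ∑ j ∈ Finset.univ.filter (fun j : Fin k => (j:ℕ) < m), v j 0 else 0) *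
            (if (i:ℕ) < m' then 2 * ∑ j ∈ Finset.univ.filter (fun j : Fin k => (j:ℕ) < m'), v j 1 else 0) -
          (if (i:ℕ) < m then 2 * ∑ j ∈ Finset.univ.filter (fun j : Fin k => (j:ℕ) < m), v j 1 else 0) *
            (if (i:ℕ) < m' then 2 * ∑ j ∈ Finset.univ.filter (fun j : Fin k => (j:ℕ) < m'), v j 0 else 0)))
      = if (i:ℕ) < min m m' then
          (v i 0 * ((∑ j ∈ Finset.univ.filter (fun j : Fin k => (j:ℕ) < m), v j 1) *
              (∑ j ∈ Finset.univ.filter (fun j : Fin k => (j:ℕ) < m'), v j 2) -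
            (∑ j ∈ Finset.univ.filter (fun j : Fin k => (j:ℕ) < m), v j 2) *
              (∑ j ∈ Finset.univ.filter (fun j : Fin k => (j:ℕ) < m'), v j 1))
          + v i 1 * ((∑ j ∈ Finset.univ.filter (fun j : Fin k => (j:ℕ) < m), v j 2) *
              (∑ j ∈ Finset.univ.filter (fun j : Fin k => (j:ℕ) < m'), v j 0) -
            (∑ j ∈ Finset.univ.filter (fun j : Fin k => (j:ℕ) < m), v j 0) *
              (∑ j ∈ Finset.univ.filter (fun j : Fin k => (j:ℕ) < m'), v j 2))
          + v i 2 * ((∑ j ∈ Finset.univ.filter (fun j : Fin k => (j:ℕ) < m), v j 0) *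
              (∑ j ∈ Finset.univ.filter (fun j : Fin k => (j:ℕ) < m'), v j 1) -
            (∑ j ∈ Finset.univ.filter (fun j : Fin k => (j:ℕ) < m), v j 1) *
              (∑ j ∈ Finset.univ.filter (fun j : Fin k => (j:ℕ) < m'), v j 0))) * 4
        else 0 := by
    intro i
    by_cases h1 : (i:ℕ) < m <;> by_cases h2 : (i:ℕ) < m' <;>
      simp only [h1, h2, if_true, if_false, Nat.lt_min, true_and, and_true, if_pos, if_neg,
        and_self, not_false_iff] <;> ring
  rw [Finset.sum_congr rfl (fun i _ => step i), ← Finset.sum_filter, ← Finset.sum_mul, sum_dot]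
  rcases le_total m m' with h | h
  · rw [Nat.min_eq_left h]; ring
  · rw [Nat.min_eq_right h]; ring

lemma br_Cc {k : ℕ} (m : ℕ) (j : Fin k) :
    su2BrK (partialSumC m) (indivC j : EE k → ℝ) = 0 := by
  funext v
  simp only [su2BrK, pd_partialSumC, pd_indivC, Pi.zero_apply]
  apply Finset.sum_eq_zero
  intro i _
  rcases eq_or_ne i j with rfl | h2
  · by_cases h1 : (i:ℕ) < m <;> simp [h1] <;> try ring
  · simp [h2]

lemma br_cc {k : ℕ} (i j : Fin k) :
    su2BrK (indivC i) (indivC j : EE k → ℝ) = 0 := by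
  funext v
  simp only [su2BrK, pd_indivC, Pi.zero_apply]
  apply Finset.sum_eq_zero
  intro l _
  rcases eq_or_ne l i with rfl | h1
  · rcases eq_or_ne l j with rfl | h2
    · simp only [if_pos rfl]; ring
    · simp [h2]
  · simp [h1]

lemma br_HC {k : ℕ} (m : ℕ) :
    su2BrK (Hkk (k := k)) (partialSumC m) = 0 := by
  funext v
  simp only [su2BrK, pd_Hkk, pd_partialSumC, Pi.zero_apply]
  have step : ∀ i : Fin k,
      (v i 0 * (((∑ j, v j 1) - v i 1) * (if (i:ℕ) < m then 2 * ∑ j ∈ Finset.univ.filter (fun j : Fin k => (j:ℕ) < m), v j 2 else 0) -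
          ((∑ j, v j 2) - v i 2) * (if (i:ℕ) < m then 2 * ∑ j ∈ Finset.univ.filter (fun j : Fin k => (j:ℕ) < m), v j 1 else 0))
        + v i 1 * (((∑ j, v j 2) - v i 2) * (if (i:ℕ) < m then 2 * ∑ j ∈ Finset.univ.filter (fun j : Fin k => (j:ℕ) < m), v j 0 else 0) -
          ((∑ j, v j 0) - v i 0) * (if (i:ℕ) < m then 2 * ∑ j ∈ Finset.univ.filter (fun j : Fin k => (j:ℕ) < m), v j 2 else 0))
        + v i 2 * (((∑ j, v j 0) - v i 0) * (if (i:ℕ) < m then 2 * ∑ j ∈ Finset.univ.filter (fun j : Fin k => (j:ℕ) < m), v j 1 else 0) -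
          ((∑ j, v j 1) - v i 1) * (if (i:ℕ) < m then 2 * ∑ j ∈ Finset.univ.filter (fun j : Fin k => (j:ℕ) < m), v j 0 else 0)))
      = if (i:ℕ) < m then
          (v i 0 * ((∑ j, v j 1) * (∑ j ∈ Finset.univ.filter (fun j : Fin k => (j:ℕ) < m), v j 2) -
              (∑ j, v j 2) * (∑ j ∈ Finset.univ.filter (fun j : Fin k => (j:ℕ) < m), v j 1))
          + v i 1 * ((∑ j, v j 2) * (∑ j ∈ Finset.univ.filter (fun j : Fin k => (j:ℕ) < m), v j 0) -
              (∑ j, v j 0) * (∑ j ∈ Finset.univ.filter (fun j : Fin k => (j:ℕ) < m), v j 2))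
          + v i 2 * ((∑ j, v j 0) * (∑ j ∈ Finset.univ.filter (fun j : Fin k => (j:ℕ) < m), v j 1) -
              (∑ j, v j 1) * (∑ j ∈ Finset.univ.filter (fun j : Fin k => (j:ℕ) < m), v j 0))) * 2
        else 0 := by
    intro i
    by_cases h1 : (i:ℕ) < m <;> simp only [h1, if_true, if_false] <;> ring
  rw [Finset.sum_congr rfl (fun i _ => step i), ← Finset.sum_filter, ← Finset.sum_mul, sum_dot]
  ring

lemma br_Hc {k : ℕ} (j : Fin k) :
    su2BrK (Hkk (k := k)) (indivC j) = 0 := by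
  funext v
  simp only [su2BrK, pd_Hkk, pd_indivC, Pi.zero_apply]
  apply Finset.sum_eq_zero
  intro i _
  rcases eq_or_ne i j with rfl | h
  · simp only [if_pos rfl, eq_self_iff_true, if_true]
    ring
  · simp [h]

/-- The partial sums `C₁,…,C_k` and the individual Casimirs `c₁,…,c_k` are pairwise
in involution on `(ℝ³)^k`; since `H^{(k)} = ½(C_k − Σᵢ cᵢ)`, the Hamiltonian `H^{(k)}`
is in involution with each `C_m` and each `c_i`. -/
theorem partial_sums_in_involution (k : ℕ) :
    (∀ m m' : ℕ, 1 ≤ m → m ≤ k → 1 ≤ m' → m' ≤ k →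
      su2BrK (partialSumC m) (partialSumC m' : (Fin k → Fin 3 → ℝ) → ℝ) = 0) ∧
    (∀ (m : ℕ), 1 ≤ m → m ≤ k → ∀ i : Fin k,
      su2BrK (partialSumC m) (indivC i) = 0) ∧
    (∀ i j : Fin k, su2BrK (indivC i) (indivC j) = 0) ∧
    ((Hkk : (Fin k → Fin 3 → ℝ) → ℝ) =
      fun v => (partialSumC k v - ∑ i, indivC i v) / 2) ∧
    (∀ (m : ℕ), 1 ≤ m → m ≤ k → su2BrK (Hkk (k := k)) (partialSumC m) = 0) ∧
    (∀ i : Fin k, su2BrK (Hkk (k := k)) (indivC i) = 0) := by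
  exact ⟨fun m m' _ _ _ _ => br_CC m m', fun m _ _ i => br_Cc m i, br_cc, hkk_eq,
    fun m _ _ => br_HC m, br_Hc⟩
end

section
/- On ℝ⁸ = T*ℝ⁴ with coordinates (q₁,q₂,q̃₁,q̃₂,p₁,p₂,p̃₁,p̃₂) and the canonical Poisson bracket, the four functions F₁ = (1/16)(p₁²+p₂²+q₁²+q₂²)², F₂ = (1/16)(p̃₁²+p̃₂²+q̃₁²+q̃₂²)², H = ¼((q₁q₂+p₁p₂)(q̃₁q̃₂+p̃₁p̃₂) + (p₁q₂−q₁p₂)(p̃₁q̃₂−q̃₁p̃₂)) + (1/16)(p₁²+q₁²−p₂²−q₂²)(p̃₁²+q̃₁²−p̃₂²−q̃₂²), and G₁ = ½(q₁q₂+p₁p₂+q̃₁q̃₂+p̃₁p̃₂) are pairwise in involution: all six pairwise canonical brackets vanish identically. -/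
/-- The canonical Poisson bracket on `T*ℝⁿ = ℝⁿ × ℝⁿ` with points `(q,p)`:
`{f,g}_can = Σᵢ (∂_{pᵢ} f ∂_{qᵢ} g − ∂_{qᵢ} f ∂_{pᵢ} g)`. -/
noncomputable def canBr {n : ℕ} (f g : (Fin n → ℝ) × (Fin n → ℝ) → ℝ)
    (w : (Fin n → ℝ) × (Fin n → ℝ)) : ℝ :=
  ∑ i, (fderiv ℝ f w (0, Pi.single i 1) * fderiv ℝ g w (Pi.single i 1, 0)
      - fderiv ℝ f w (Pi.single i 1, 0) * fderiv ℝ g w (0, Pi.single i 1))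

namespace JordanSchwinger4

/-- Coordinates on `ℝ⁸ = T*ℝ⁴`: `w = (q,p)` with `q = (q₁,q₂,q̃₁,q̃₂)`,
`p = (p₁,p₂,p̃₁,p̃₂)`.  `F₁ = (1/16)(p₁²+p₂²+q₁²+q₂²)²`. -/
noncomputable def F₁ (w : (Fin 4 → ℝ) × (Fin 4 → ℝ)) : ℝ :=
  (w.2 0 ^ 2 + w.2 1 ^ 2 + w.1 0 ^ 2 + w.1 1 ^ 2) ^ 2 / 16

/-- `F₂ = (1/16)(p̃₁²+p̃₂²+q̃₁²+q̃₂²)²`. -/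
noncomputable def F₂ (w : (Fin 4 → ℝ) × (Fin 4 → ℝ)) : ℝ :=
  (w.2 2 ^ 2 + w.2 3 ^ 2 + w.1 2 ^ 2 + w.1 3 ^ 2) ^ 2 / 16

/-- `H = ¼((q₁q₂+p₁p₂)(q̃₁q̃₂+p̃₁p̃₂) + (p₁q₂−q₁p₂)(p̃₁q̃₂−q̃₁p̃₂))
      + (1/16)(p₁²+q₁²−p₂²−q₂²)(p̃₁²+q̃₁²−p̃₂²−q̃₂²)`. -/
noncomputable def H (w : (Fin 4 → ℝ) × (Fin 4 → ℝ)) : ℝ :=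
  ((w.1 0 * w.1 1 + w.2 0 * w.2 1) * (w.1 2 * w.1 3 + w.2 2 * w.2 3)
    + (w.2 0 * w.1 1 - w.1 0 * w.2 1) * (w.2 2 * w.1 3 - w.1 2 * w.2 3)) / 4
  + (w.2 0 ^ 2 + w.1 0 ^ 2 - w.2 1 ^ 2 - w.1 1 ^ 2)
    * (w.2 2 ^ 2 + w.1 2 ^ 2 - w.2 3 ^ 2 - w.1 3 ^ 2) / 16

/-- `G₁ = ½(q₁q₂+p₁p₂+q̃₁q̃₂+p̃₁p̃₂)`. -/
noncomputable def G₁ (w : (Fin 4 → ℝ) × (Fin 4 → ℝ)) : ℝ :=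
  (w.1 0 * w.1 1 + w.2 0 * w.2 1 + w.1 2 * w.1 3 + w.2 2 * w.2 3) / 2

/-! ### Auxiliary machinery -/

abbrev E8 := (Fin 4 → ℝ) × (Fin 4 → ℝ)

noncomputable def Qc (i : Fin 4) : E8 →L[ℝ] ℝ :=
  (ContinuousLinearMap.proj i).comp (ContinuousLinearMap.fst ℝ (Fin 4 → ℝ) (Fin 4 → ℝ))

noncomputable def Pc (i : Fin 4) : E8 →L[ℝ] ℝ :=
  (ContinuousLinearMap.proj i).comp (ContinuousLinearMap.snd ℝ (Fin 4 → ℝ) (Fin 4 → ℝ))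

lemma hQ (i : Fin 4) (w : E8) : HasFDerivAt (fun w : E8 => w.1 i) (Qc i) w :=
  (Qc i).hasFDerivAt

lemma hP (i : Fin 4) (w : E8) : HasFDerivAt (fun w : E8 => w.2 i) (Pc i) w :=
  (Pc i).hasFDerivAt

lemma fd_F₁ (w v : E8) :
    fderiv ℝ F₁ w v = (w.2 0 ^ 2 + w.2 1 ^ 2 + w.1 0 ^ 2 + w.1 1 ^ 2) *
      (w.2 0 * v.2 0 + w.2 1 * v.2 1 + w.1 0 * v.1 0 + w.1 1 * v.1 1) / 4 := by
  have hF : F₁ = fun w : E8 =>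
      ((w.2 0 * w.2 0 + w.2 1 * w.2 1 + w.1 0 * w.1 0 + w.1 1 * w.1 1) *
       (w.2 0 * w.2 0 + w.2 1 * w.2 1 + w.1 0 * w.1 0 + w.1 1 * w.1 1)) * (16 : ℝ)⁻¹ := by
    funext w; simp only [F₁]; ring
  rw [hF]
  have hs : HasFDerivAt (fun w : E8 =>
      w.2 0 * w.2 0 + w.2 1 * w.2 1 + w.1 0 * w.1 0 + w.1 1 * w.1 1) _ w :=
    ((((hP 0 w).mul (hP 0 w)).add ((hP 1 w).mul (hP 1 w))).add
      ((hQ 0 w).mul (hQ 0 w))).add ((hQ 1 w).mul (hQ 1 w))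
  have h := (hs.mul hs).mul_const ((16 : ℝ)⁻¹)
  simp only [Pi.mul_apply] at h
  rw [h.fderiv]
  simp [Qc, Pc]
  ring

lemma fd_F₂ (w v : E8) :
    fderiv ℝ F₂ w v = (w.2 2 ^ 2 + w.2 3 ^ 2 + w.1 2 ^ 2 + w.1 3 ^ 2) *
      (w.2 2 * v.2 2 + w.2 3 * v.2 3 + w.1 2 * v.1 2 + w.1 3 * v.1 3) / 4 := by
  have hF : F₂ = fun w : E8 =>
      ((w.2 2 * w.2 2 + w.2 3 * w.2 3 + w.1 2 * w.1 2 + w.1 3 * w.1 3) *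
       (w.2 2 * w.2 2 + w.2 3 * w.2 3 + w.1 2 * w.1 2 + w.1 3 * w.1 3)) * (16 : ℝ)⁻¹ := by
    funext w; simp only [F₂]; ring
  rw [hF]
  have hs : HasFDerivAt (fun w : E8 =>
      w.2 2 * w.2 2 + w.2 3 * w.2 3 + w.1 2 * w.1 2 + w.1 3 * w.1 3) _ w :=
    ((((hP 2 w).mul (hP 2 w)).add ((hP 3 w).mul (hP 3 w))).add
      ((hQ 2 w).mul (hQ 2 w))).add ((hQ 3 w).mul (hQ 3 w))
  have h := (hs.mul hs).mul_const ((16 : ℝ)⁻¹)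
  simp only [Pi.mul_apply] at h
  rw [h.fderiv]
  simp [Qc, Pc]
  ring

lemma fd_G₁ (w v : E8) :
    fderiv ℝ G₁ w v = (v.1 0 * w.1 1 + w.1 0 * v.1 1 + v.2 0 * w.2 1 + w.2 0 * v.2 1
      + v.1 2 * w.1 3 + w.1 2 * v.1 3 + v.2 2 * w.2 3 + w.2 2 * v.2 3) / 2 := by
  have hF : G₁ = fun w : E8 =>
      (w.1 0 * w.1 1 + w.2 0 * w.2 1 + w.1 2 * w.1 3 + w.2 2 * w.2 3) * (2 : ℝ)⁻¹ := by
    funext w; simp only [G₁]; ring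
  rw [hF]
  have h : HasFDerivAt (fun w : E8 =>
      (w.1 0 * w.1 1 + w.2 0 * w.2 1 + w.1 2 * w.1 3 + w.2 2 * w.2 3) * (2 : ℝ)⁻¹) _ w :=
    ((((((hQ 0 w).mul (hQ 1 w)).add ((hP 0 w).mul (hP 1 w))).add
      ((hQ 2 w).mul (hQ 3 w))).add ((hP 2 w).mul (hP 3 w)))).mul_const ((2 : ℝ)⁻¹)
  rw [h.fderiv]
  simp [Qc, Pc]
  ring

lemma fd_H (w v : E8) :
    fderiv ℝ H w v =
      ((v.1 0 * w.1 1 + w.1 0 * v.1 1 + v.2 0 * w.2 1 + w.2 0 * v.2 1)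
          * (w.1 2 * w.1 3 + w.2 2 * w.2 3)
        + (w.1 0 * w.1 1 + w.2 0 * w.2 1)
          * (v.1 2 * w.1 3 + w.1 2 * v.1 3 + v.2 2 * w.2 3 + w.2 2 * v.2 3)
        + (v.2 0 * w.1 1 + w.2 0 * v.1 1 - v.1 0 * w.2 1 - w.1 0 * v.2 1)
          * (w.2 2 * w.1 3 - w.1 2 * w.2 3)
        + (w.2 0 * w.1 1 - w.1 0 * w.2 1)
          * (v.2 2 * w.1 3 + w.2 2 * v.1 3 - v.1 2 * w.2 3 - w.1 2 * v.2 3)) / 4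
      + ((2 * w.2 0 * v.2 0 + 2 * w.1 0 * v.1 0 - 2 * w.2 1 * v.2 1 - 2 * w.1 1 * v.1 1)
          * (w.2 2 ^ 2 + w.1 2 ^ 2 - w.2 3 ^ 2 - w.1 3 ^ 2)
        + (w.2 0 ^ 2 + w.1 0 ^ 2 - w.2 1 ^ 2 - w.1 1 ^ 2)
          * (2 * w.2 2 * v.2 2 + 2 * w.1 2 * v.1 2 - 2 * w.2 3 * v.2 3 - 2 * w.1 3 * v.1 3)) / 16 := by
  have hF : H = fun w : E8 =>
      ((w.1 0 * w.1 1 + w.2 0 * w.2 1) * (w.1 2 * w.1 3 + w.2 2 * w.2 3)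
        + (w.2 0 * w.1 1 - w.1 0 * w.2 1) * (w.2 2 * w.1 3 - w.1 2 * w.2 3)) * (4 : ℝ)⁻¹
      + ((w.2 0 * w.2 0 + w.1 0 * w.1 0 - w.2 1 * w.2 1 - w.1 1 * w.1 1)
        * (w.2 2 * w.2 2 + w.1 2 * w.1 2 - w.2 3 * w.2 3 - w.1 3 * w.1 3)) * (16 : ℝ)⁻¹ := by
    funext w; simp only [H]; ring
  rw [hF]
  have h1 : HasFDerivAt (fun w : E8 =>
      ((w.1 0 * w.1 1 + w.2 0 * w.2 1) * (w.1 2 * w.1 3 + w.2 2 * w.2 3)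
        + (w.2 0 * w.1 1 - w.1 0 * w.2 1) * (w.2 2 * w.1 3 - w.1 2 * w.2 3)) * (4 : ℝ)⁻¹) _ w :=
    ((((((hQ 0 w).mul (hQ 1 w)).add ((hP 0 w).mul (hP 1 w))).mul
        (((hQ 2 w).mul (hQ 3 w)).add ((hP 2 w).mul (hP 3 w)))).add
      ((((hP 0 w).mul (hQ 1 w)).sub ((hQ 0 w).mul (hP 1 w))).mul
        (((hP 2 w).mul (hQ 3 w)).sub ((hQ 2 w).mul (hP 3 w))))).mul_const ((4 : ℝ)⁻¹))
  have h2 : HasFDerivAt (fun w : E8 =>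
      ((w.2 0 * w.2 0 + w.1 0 * w.1 0 - w.2 1 * w.2 1 - w.1 1 * w.1 1)
        * (w.2 2 * w.2 2 + w.1 2 * w.1 2 - w.2 3 * w.2 3 - w.1 3 * w.1 3)) * (16 : ℝ)⁻¹) _ w :=
    ((((((hP 0 w).mul (hP 0 w)).add ((hQ 0 w).mul (hQ 0 w))).sub
          ((hP 1 w).mul (hP 1 w))).sub ((hQ 1 w).mul (hQ 1 w))).mul
      (((((hP 2 w).mul (hP 2 w)).add ((hQ 2 w).mul (hQ 2 w))).sub
          ((hP 3 w).mul (hP 3 w))).sub ((hQ 3 w).mul (hQ 3 w)))).mul_const ((16 : ℝ)⁻¹)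
  have h3 := h1.add h2
  simp only [Pi.add_def] at h3
  rw [h3.fderiv]
  simp [Qc, Pc]
  ring

/-- The four functions `F₁, F₂, H, G₁` on `T*ℝ⁴` are pairwise in involution for the
canonical Poisson bracket. -/
theorem four_functions_pairwise_involutive :
    canBr F₁ F₂ = 0 ∧ canBr F₁ H = 0 ∧ canBr F₁ G₁ = 0 ∧
    canBr F₂ H = 0 ∧ canBr F₂ G₁ = 0 ∧ canBr H G₁ = 0 := by
  refine ⟨?_, ?_, ?_, ?_, ?_, ?_⟩ <;> funext w
  · simp only [canBr, Fin.sum_univ_four, fd_F₁, fd_F₂]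
    simp [Pi.single_apply]
    try ring
  · simp only [canBr, Fin.sum_univ_four, fd_F₁, fd_H]
    simp [Pi.single_apply]
    try ring
  · simp only [canBr, Fin.sum_univ_four, fd_F₁, fd_G₁]
    simp [Pi.single_apply]
    try ring
  · simp only [canBr, Fin.sum_univ_four, fd_F₂, fd_H]
    simp [Pi.single_apply]
    try ring
  · simp only [canBr, Fin.sum_univ_four, fd_F₂, fd_G₁]
    simp [Pi.single_apply]
    try ring
  · simp only [canBr, Fin.sum_univ_four, fd_H, fd_G₁]
    simp [Pi.single_apply]
    try ring

end JordanSchwinger4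
end

section
/- Fix k ≠ 0, γ ∈ ℝ, δ > 0 and a ≥ 0 (with a > 0 if γ = 0). On the open set U = {(q,p) ∈ ℝ² : a² − (4γ/k²) sinh²(kp/2) > 0}, define X(q,p) = √(a² − (4γ/k²) sinh²(kp/2)) · sin(δq)/δ, Y(q,p) = √(a² − (4γ/k²) sinh²(kp/2)) · cos(δq), Z(q,p) = p. Then these functions realize the deformed commutation rules with α = δ² and β = 1 under the canonical bracket on U: {Z,X}_{can} = Y, {Y,Z}_{can} = δ² X, and {X,Y}_{can} = γ sinh(kZ)/k, where {f,g}_{can} = ∂_p f ∂_q g − ∂_q f ∂_p g. -/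
/-- The canonical Poisson bracket on `ℝ²` with coordinates `(q,p)`:
`{f,g}_can = ∂_p f ∂_q g − ∂_q f ∂_p g`. -/
noncomputable def canBr2 (f g : ℝ × ℝ → ℝ) (w : ℝ × ℝ) : ℝ :=
  fderiv ℝ f w (0, 1) * fderiv ℝ g w (1, 0) - fderiv ℝ f w (1, 0) * fderiv ℝ g w (0, 1)

/-- On the open set where `a² − (4γ/k²) sinh²(kp/2) > 0`, the functions
`X = √(a² − (4γ/k²) sinh²(kp/2)) sin(δq)/δ`, `Y = √(a² − (4γ/k²) sinh²(kp/2)) cos(δq)`,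
`Z = p` realize the deformed commutation rules with `α = δ²`, `β = 1`:
`{Z,X} = Y`, `{Y,Z} = δ²X`, `{X,Y} = γ sinh(kZ)/k`. -/
theorem symplectic_realization_of_deformed_rules
    (k γ δ a : ℝ) (hk : k ≠ 0) (hδ : 0 < δ) (ha : 0 ≤ a) (ha' : γ = 0 → 0 < a)
    (X Y Z : ℝ × ℝ → ℝ)
    (hX : X = fun w => Real.sqrt (a ^ 2 - (4 * γ / k ^ 2) * Real.sinh (k * w.2 / 2) ^ 2)
      * Real.sin (δ * w.1) / δ)
    (hY : Y = fun w => Real.sqrt (a ^ 2 - (4 * γ / k ^ 2) * Real.sinh (k * w.2 / 2) ^ 2)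
      * Real.cos (δ * w.1))
    (hZ : Z = fun w => w.2) :
    ∀ w : ℝ × ℝ, 0 < a ^ 2 - (4 * γ / k ^ 2) * Real.sinh (k * w.2 / 2) ^ 2 →
      canBr2 Z X w = Y w ∧
      canBr2 Y Z w = δ ^ 2 * X w ∧
      canBr2 X Y w = γ * Real.sinh (k * Z w) / k := by
  intro w hpos
  set c : ℝ := 4 * γ / k ^ 2 with hc
  obtain ⟨q, p⟩ := w
  simp only at hpos ⊢
  set g : ℝ → ℝ := fun p => a ^ 2 - c * Real.sinh (k * p / 2) ^ 2 with hg
  have hgpos : 0 < g p := hpos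
  have hgne : g p ≠ 0 := ne_of_gt hgpos
  -- derivative of g
  have h1 : HasDerivAt (fun p : ℝ => k * p / 2) (k / 2) p := by
    simpa using ((hasDerivAt_id p).const_mul k).div_const 2
  have h5 : HasDerivAt g
      (0 - c * (2 * Real.sinh (k * p / 2) ^ 1 * (Real.cosh (k * p / 2) * (k / 2)))) p :=
    (hasDerivAt_const p (a ^ 2)).sub ((h1.sinh.pow 2).const_mul c)
  set G' : ℝ := 0 - c * (2 * Real.sinh (k * p / 2) ^ 1 * (Real.cosh (k * p / 2) * (k / 2)))
    with hG'
  have hsq : HasDerivAt (fun p => Real.sqrt (g p)) (1 / (2 * Real.sqrt (g p)) * G') p :=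
    (Real.hasDerivAt_sqrt hgne).comp p h5
  set S : ℝ := 1 / (2 * Real.sqrt (g p)) * G' with hS
  -- FDeriv pieces
  have HP : HasFDerivAt (fun w : ℝ × ℝ => Real.sqrt (g w.2))
      (S • ContinuousLinearMap.snd ℝ ℝ ℝ) (q, p) :=
    by have := hsq.comp_hasFDerivAt (q, p) (hasFDerivAt_snd : HasFDerivAt (Prod.snd : ℝ × ℝ → ℝ) (ContinuousLinearMap.snd ℝ ℝ ℝ) (q, p)); exact this
  have hsin : HasDerivAt (fun q : ℝ => Real.sin (δ * q)) (Real.cos (δ * q) * δ) q := by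
    simpa using ((hasDerivAt_id q).const_mul δ).sin
  have hcos : HasDerivAt (fun q : ℝ => Real.cos (δ * q)) (-Real.sin (δ * q) * δ) q := by
    simpa using ((hasDerivAt_id q).const_mul δ).cos
  have HS : HasFDerivAt (fun w : ℝ × ℝ => Real.sin (δ * w.1))
      ((Real.cos (δ * q) * δ) • ContinuousLinearMap.fst ℝ ℝ ℝ) (q, p) :=
    by have := hsin.comp_hasFDerivAt (q, p) (hasFDerivAt_fst : HasFDerivAt (Prod.fst : ℝ × ℝ → ℝ) (ContinuousLinearMap.fst ℝ ℝ ℝ) (q, p)); exact this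
  have HC : HasFDerivAt (fun w : ℝ × ℝ => Real.cos (δ * w.1))
      ((-Real.sin (δ * q) * δ) • ContinuousLinearMap.fst ℝ ℝ ℝ) (q, p) :=
    by have := hcos.comp_hasFDerivAt (q, p) (hasFDerivAt_fst : HasFDerivAt (Prod.fst : ℝ × ℝ → ℝ) (ContinuousLinearMap.fst ℝ ℝ ℝ) (q, p)); exact this
  have HX := (HP.mul HS).const_smul δ⁻¹
  have HY := HP.mul HC
  have HZ : HasFDerivAt (fun w : ℝ × ℝ => w.2) (ContinuousLinearMap.snd ℝ ℝ ℝ) (q, p) :=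
    hasFDerivAt_snd
  have hXeq : X = fun w : ℝ × ℝ => δ⁻¹ • (Real.sqrt (g w.2) * Real.sin (δ * w.1)) := by
    rw [hX]; funext w; simp [smul_eq_mul]; ring
  have hYeq : Y = fun w : ℝ × ℝ => Real.sqrt (g w.2) * Real.cos (δ * w.1) := by
    rw [hY]
  have fX : fderiv ℝ X (q, p) = δ⁻¹ •
      (Real.sqrt (g p) • ((Real.cos (δ * q) * δ) • ContinuousLinearMap.fst ℝ ℝ ℝ) +
        Real.sin (δ * q) • (S • ContinuousLinearMap.snd ℝ ℝ ℝ)) := by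
    rw [hXeq]; exact HX.fderiv
  have fY : fderiv ℝ Y (q, p) =
      Real.sqrt (g p) • ((-Real.sin (δ * q) * δ) • ContinuousLinearMap.fst ℝ ℝ ℝ) +
        Real.cos (δ * q) • (S • ContinuousLinearMap.snd ℝ ℝ ℝ) := by
    rw [hYeq]; exact HY.fderiv
  have fZ : fderiv ℝ Z (q, p) = ContinuousLinearMap.snd ℝ ℝ ℝ := by
    rw [hZ]; exact HZ.fderiv
  have hsq2 : Real.sqrt (g p) ^ 2 = g p := Real.sq_sqrt hgpos.le
  have hsqne : Real.sqrt (g p) ≠ 0 := ne_of_gt (Real.sqrt_pos.mpr hgpos)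
  have trig : Real.sin (δ * q) ^ 2 + Real.cos (δ * q) ^ 2 = 1 := Real.sin_sq_add_cos_sq _
  have sinh2 : Real.sinh (k * p) = 2 * Real.sinh (k * p / 2) * Real.cosh (k * p / 2) := by
    have := Real.sinh_two_mul (k * p / 2)
    rw [show 2 * (k * p / 2) = k * p by ring] at this
    exact this
  have hδ' : δ ≠ 0 := ne_of_gt hδ
  clear_value S G' c g
  refine ⟨?_, ?_, ?_⟩
  · rw [canBr2, fX, fZ, hYeq]
    simp only [ContinuousLinearMap.add_apply, ContinuousLinearMap.smul_apply,
      ContinuousLinearMap.coe_fst', ContinuousLinearMap.coe_snd', smul_eq_mul,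
      mul_zero, mul_one, zero_mul, one_mul, add_zero, zero_add]
    field_simp
    ring
  · rw [canBr2, fY, fZ, hXeq]
    simp only [ContinuousLinearMap.add_apply, ContinuousLinearMap.smul_apply,
      ContinuousLinearMap.coe_fst', ContinuousLinearMap.coe_snd', smul_eq_mul,
      mul_zero, mul_one, zero_mul, one_mul, add_zero, zero_add]
    field_simp
    ring
  · rw [canBr2, fX, fY, hZ]
    simp only [ContinuousLinearMap.add_apply, ContinuousLinearMap.smul_apply,
      ContinuousLinearMap.coe_fst', ContinuousLinearMap.coe_snd', smul_eq_mul,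
      mul_zero, mul_one, zero_mul, one_mul, add_zero, zero_add]
    have key2 : -(S * Real.sqrt (g p)) = γ * Real.sinh (k * p) / k := by
      rw [hS, hG', hc, sinh2]
      field_simp [hsqne, hk]
      ring
    rw [← key2]
    field_simp [hδ']
    linear_combination (-S) * trig
end
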